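/- Craig interpolation from resolution refutations via McMillan's algorithm: if T is a resolution derivation tree over (A, B) deriving the empty clause, then I := itp(T) satisfies: every valuation satisfying A satisfies I; no valuation satisfies both B and I; and I depends only on shared variables. Hence I is a Craig interpolant for (A, B). -/
import Mathlib


abbrev Clause (V : Type) := Finset (V × Bool)

def Res {V : Type} [DecidableEq V] (p : V) (C D : Clause V) : Clause V :=
  (C \ {(p, true)}) ∪ (D \ {(p, false)})

/-- A valuation satisfies a clause iff it satisfies some literal of it. -/
def SatClause {V : Type} (ν : V → Bool) (C : Clause V) : Prop :=
  ∃ l ∈ C, ν l.1 = l.2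

/-- A valuation satisfies a (finite) set of clauses. -/
def SatSet {V : Type} (ν : V → Bool) (A : Finset (Clause V)) : Prop :=
  ∀ C ∈ A, SatClause ν C

/-- The set of variables occurring in literals of clauses of `A`. -/
def varsOf {V : Type} [DecidableEq V] (A : Finset (Clause V)) : Finset V :=
  A.biUnion fun C => C.image Prod.fst

/-- A variable is A-local if it occurs in `A` but not in `B`. -/
def ALocal {V : Type} [DecidableEq V] (A B : Finset (Clause V)) (v : V) : Prop :=
  v ∈ varsOf A ∧ v ∉ varsOf B

/-- A variable is shared if it occurs both in `A` and in `B`. -/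
def Shared {V : Type} [DecidableEq V] (A B : Finset (Clause V)) (v : V) : Prop :=
  v ∈ varsOf A ∧ v ∈ varsOf B

instance {V : Type} [DecidableEq V] (A B : Finset (Clause V)) :
    DecidablePred (ALocal A B) := fun _ => instDecidableAnd

instance {V : Type} [DecidableEq V] (A B : Finset (Clause V)) :
    DecidablePred (Shared A B) := fun _ => instDecidableAnd

/-- A predicate on valuations depends only on shared variables. -/
def DependsOnlyShared {V : Type} [DecidableEq V] (A B : Finset (Clause V))
    (I : (V → Bool) → Prop) : Prop :=
  ∀ ν ν' : V → Bool, (∀ v, Shared A B v → ν v = ν' v) → (I ν ↔ I ν')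

/-- The McMillan invariant for a clause `C` and a predicate `I` on valuations. -/
def McMillanInv {V : Type} [DecidableEq V] (A B : Finset (Clause V))
    (C : Clause V) (I : (V → Bool) → Prop) : Prop :=
  (∀ ν, SatSet ν A → I ν ∨ SatClause ν (C.filter fun l => ALocal A B l.1)) ∧
  (∀ ν, SatSet ν B → I ν → SatClause ν (C.filter fun l => ¬ ALocal A B l.1)) ∧
  DependsOnlyShared A B I

/-- A resolution derivation tree over `(A, B)` deriving a clause. Leaves carry
a tag recording whether the clause comes from `A` or from `B`. -/
inductive RTree {V : Type} [DecidableEq V] (A B : Finset (Clause V)) :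
    Clause V → Type
  | leafA {C : Clause V} : C ∈ A → RTree A B C
  | leafB {C : Clause V} : C ∈ B → RTree A B C
  | node {Cp Cm : Clause V} (p : V) :
      (p, true) ∈ Cp → (p, false) ∈ Cm →
      RTree A B Cp → RTree A B Cm → RTree A B (Res p Cp Cm)

/-- The McMillan partial interpolant of a derivation tree. -/
def itp {V : Type} [DecidableEq V] {A B : Finset (Clause V)} :
    {C : Clause V} → RTree A B C → (V → Bool) → Prop
  | C, .leafA _, ν => SatClause ν (C.filter fun l => Shared A B l.1)
  | _, .leafB _, _ => True
  | _, .node p _ _ T1 T2, ν =>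
      if ALocal A B p then itp T1 ν ∨ itp T2 ν else itp T1 ν ∧ itp T2 ν

lemma mem_varsOf {V : Type} [DecidableEq V] {A : Finset (Clause V)} {C : Clause V}
    {l : V × Bool} (hC : C ∈ A) (hl : l ∈ C) : l.1 ∈ varsOf A := by
  simp only [varsOf, Finset.mem_biUnion, Finset.mem_image]
  exact ⟨C, hC, l, hl, rfl⟩

lemma mem_Res {V : Type} [DecidableEq V] {p : V} {Cp Cm : Clause V} {l : V × Bool} :
    l ∈ Res p Cp Cm ↔ (l ∈ Cp ∧ l ≠ (p, true)) ∨ (l ∈ Cm ∧ l ≠ (p, false)) := by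
  simp [Res]

lemma mcmillanInv_tree {V : Type} [DecidableEq V] {A B : Finset (Clause V)} :
    ∀ {C : Clause V} (T : RTree A B C), McMillanInv A B C (itp T) := by
  intro C T
  induction T with
  | @leafA C hC =>
    refine ⟨?_, ?_, ?_⟩
    · intro ν hA
      obtain ⟨l, hl, hsat⟩ := hA C hC
      by_cases hb : l.1 ∈ varsOf B
      · exact Or.inl ⟨l, Finset.mem_filter.2 ⟨hl, mem_varsOf hC hl, hb⟩, hsat⟩
      · exact Or.inr ⟨l, Finset.mem_filter.2 ⟨hl, mem_varsOf hC hl, hb⟩, hsat⟩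
    · intro ν _ hI
      obtain ⟨l, hl, hsat⟩ := hI
      rw [Finset.mem_filter] at hl
      exact ⟨l, Finset.mem_filter.2 ⟨hl.1, fun h => h.2 hl.2.2⟩, hsat⟩
    · intro ν ν' h
      show SatClause ν _ ↔ SatClause ν' _
      constructor
      · rintro ⟨l, hl, hsat⟩
        exact ⟨l, hl, by rw [← h l.1 (Finset.mem_filter.1 hl).2]; exact hsat⟩
      · rintro ⟨l, hl, hsat⟩
        exact ⟨l, hl, by rw [h l.1 (Finset.mem_filter.1 hl).2]; exact hsat⟩
  | @leafB C hC =>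
    refine ⟨fun ν _ => Or.inl trivial, ?_, fun ν ν' _ => Iff.rfl⟩
    intro ν hB _
    obtain ⟨l, hl, hsat⟩ := hB C hC
    exact ⟨l, Finset.mem_filter.2 ⟨hl, fun h => h.2 (mem_varsOf hC hl)⟩, hsat⟩
  | @node Cp Cm p hp hm T1 T2 ih1 ih2 =>
    obtain ⟨a1, b1, d1⟩ := ih1
    obtain ⟨a2, b2, d2⟩ := ih2
    by_cases hloc : ALocal A B p
    · refine ⟨?_, ?_, ?_⟩
      · intro ν hA
        show (if ALocal A B p then itp T1 ν ∨ itp T2 ν else itp T1 ν ∧ itp T2 ν) ∨ _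
        rw [if_pos hloc]
        rcases a1 ν hA with h1 | ⟨l1, hl1, hs1⟩
        · exact Or.inl (Or.inl h1)
        rcases a2 ν hA with h2 | ⟨l2, hl2, hs2⟩
        · exact Or.inl (Or.inr h2)
        rw [Finset.mem_filter] at hl1 hl2
        by_cases e1 : l1 = (p, true)
        · by_cases e2 : l2 = (p, false)
          · exfalso
            rw [e1] at hs1; rw [e2] at hs2
            simp at hs1 hs2; rw [hs1] at hs2; exact Bool.true_eq_false.mp hs2
          · exact Or.inr ⟨l2, Finset.mem_filter.2
              ⟨mem_Res.2 (Or.inr ⟨hl2.1, e2⟩), hl2.2⟩, hs2⟩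
        · exact Or.inr ⟨l1, Finset.mem_filter.2
            ⟨mem_Res.2 (Or.inl ⟨hl1.1, e1⟩), hl1.2⟩, hs1⟩
      · intro ν hB hI
        have hI' : itp T1 ν ∨ itp T2 ν := by
          have := hI; rwa [show itp (RTree.node p hp hm T1 T2) ν =
            (if ALocal A B p then itp T1 ν ∨ itp T2 ν else itp T1 ν ∧ itp T2 ν) from rfl,
            if_pos hloc] at this
        rcases hI' with h1 | h2
        · obtain ⟨l, hl, hs⟩ := b1 ν hB h1
          rw [Finset.mem_filter] at hl
          have hne : l ≠ (p, true) := fun e => hl.2 (by rw [e]; exact hloc)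
          exact ⟨l, Finset.mem_filter.2 ⟨mem_Res.2 (Or.inl ⟨hl.1, hne⟩), hl.2⟩, hs⟩
        · obtain ⟨l, hl, hs⟩ := b2 ν hB h2
          rw [Finset.mem_filter] at hl
          have hne : l ≠ (p, false) := fun e => hl.2 (by rw [e]; exact hloc)
          exact ⟨l, Finset.mem_filter.2 ⟨mem_Res.2 (Or.inr ⟨hl.1, hne⟩), hl.2⟩, hs⟩
      · intro ν ν' h
        show (if ALocal A B p then itp T1 ν ∨ itp T2 ν else _) ↔
          (if ALocal A B p then itp T1 ν' ∨ itp T2 ν' else _)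
        rw [if_pos hloc, if_pos hloc, d1 ν ν' h, d2 ν ν' h]
    · refine ⟨?_, ?_, ?_⟩
      · intro ν hA
        show (if ALocal A B p then itp T1 ν ∨ itp T2 ν else itp T1 ν ∧ itp T2 ν) ∨ _
        rw [if_neg hloc]
        rcases a1 ν hA with h1 | ⟨l1, hl1, hs1⟩
        · rcases a2 ν hA with h2 | ⟨l2, hl2, hs2⟩
          · exact Or.inl ⟨h1, h2⟩
          · rw [Finset.mem_filter] at hl2
            have hne : l2 ≠ (p, false) := fun e => hloc (by rw [e] at hl2; exact hl2.2)
            exact Or.inr ⟨l2, Finset.mem_filter.2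
              ⟨mem_Res.2 (Or.inr ⟨hl2.1, hne⟩), hl2.2⟩, hs2⟩
        · rw [Finset.mem_filter] at hl1
          have hne : l1 ≠ (p, true) := fun e => hloc (by rw [e] at hl1; exact hl1.2)
          exact Or.inr ⟨l1, Finset.mem_filter.2
            ⟨mem_Res.2 (Or.inl ⟨hl1.1, hne⟩), hl1.2⟩, hs1⟩
      · intro ν hB hI
        have hI' : itp T1 ν ∧ itp T2 ν := by
          have := hI; rwa [show itp (RTree.node p hp hm T1 T2) ν =
            (if ALocal A B p then itp T1 ν ∨ itp T2 ν else itp T1 ν ∧ itp T2 ν) from rfl,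
            if_neg hloc] at this
        obtain ⟨l1, hl1, hs1⟩ := b1 ν hB hI'.1
        obtain ⟨l2, hl2, hs2⟩ := b2 ν hB hI'.2
        rw [Finset.mem_filter] at hl1 hl2
        by_cases e1 : l1 = (p, true)
        · have e2 : l2 ≠ (p, false) := by
            intro e2
            rw [e1] at hs1; rw [e2] at hs2
            simp at hs1 hs2; rw [hs1] at hs2; exact Bool.true_eq_false.mp hs2
          exact ⟨l2, Finset.mem_filter.2 ⟨mem_Res.2 (Or.inr ⟨hl2.1, e2⟩), hl2.2⟩, hs2⟩
        · exact ⟨l1, Finset.mem_filter.2 ⟨mem_Res.2 (Or.inl ⟨hl1.1, e1⟩), hl1.2⟩, hs1⟩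
      · intro ν ν' h
        show (if ALocal A B p then _ else itp T1 ν ∧ itp T2 ν) ↔
          (if ALocal A B p then _ else itp T1 ν' ∧ itp T2 ν')
        rw [if_neg hloc, if_neg hloc, d1 ν ν' h, d2 ν ν' h]

/-- Craig interpolation from resolution refutations via McMillan's algorithm:
the interpolant computed from a refutation is implied by `A`, inconsistent with
`B`, and depends only on shared variables. -/
theorem mcmillan_interpolation {V : Type} [DecidableEq V]
    (A B : Finset (Clause V)) (T : RTree A B (∅ : Clause V)) :
    (∀ ν, SatSet ν A → itp T ν) ∧
    (∀ ν, ¬ (SatSet ν B ∧ itp T ν)) ∧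
    DependsOnlyShared A B (itp T) := by
  obtain ⟨h1, h2, h3⟩ := mcmillanInv_tree T
  have hempty : ∀ ν (P : V × Bool → Prop) [DecidablePred P],
      ¬ SatClause ν ((∅ : Clause V).filter P) := by
    rintro ν P _ ⟨l, hl, _⟩
    simp at hl
  refine ⟨?_, ?_, h3⟩
  · intro ν hA
    rcases h1 ν hA with h | h
    · exact h
    · exact absurd h (hempty ν _)
  · rintro ν ⟨hB, hI⟩
    exact hempty ν _ (h2 ν hB hI)
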